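/- Path gluing step of path coupling: suppose that for any two states s, s' with d(s, s') = 1 there exists a coupling μ of f(s) and f(s') such that E_{(r,r')∼μ}[d(r, r')] ≤ β, where β ≥ 0. Then for any two states s, s' there exists a coupling μ of f(s) and f(s') such that E_{(r,r')∼μ}[d(r, r')] ≤ β · d(s, s'). -/

import Mathlib

open scoped ENNReal

/-- A coupling of `μ₁` and `μ₂` is a distribution on pairs whose marginals are `μ₁` and `μ₂`. -/
def IsCoupling {A B : Type*} (μ : PMF (A × B)) (μ₁ : PMF A) (μ₂ : PMF B) : Prop :=
  μ.map Prod.fst = μ₁ ∧ μ.map Prod.snd = μ₂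

/-!
Two couplings that share their middle marginal can be glued: disintegrating the second one along
its first coordinate and feeding the first one into that kernel gives a law on triples whose outer
pair couples the outer marginals, and by the triangle inequality its expected distance is at most
the sum of the two expected distances. Strong induction on `d s s'`, splitting at an intermediate
point supplied by the path property, then adds up `β * d s s'' + β * d s'' s' = β * d s s'`.
-/

namespace PMF

variable {α β γ : Type*}

theorem tsum_map_mul (μ : PMF α) (g : α → β) (F : β → ℝ≥0∞) :
    ∑' b, μ.map g b * F b = ∑' a, μ a * F (g a) := by
  simp only [map_apply, ← ENNReal.tsum_mul_right, ite_mul, zero_mul]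
  rw [ENNReal.tsum_comm]
  exact tsum_congr fun a => by simp

theorem map_fst_apply (μ : PMF (α × β)) (a : α) : μ.map Prod.fst a = ∑' b, μ (a, b) := by
  rw [map_apply, ENNReal.tsum_prod', tsum_eq_single a]
  · simp
  · intro a' h
    simp [Ne.symm h]

theorem map_prodMk_apply [DecidableEq α] (μ : PMF β) (a a' : α) (b : β) :
    μ.map (Prod.mk a) (a', b) = if a' = a then μ b else 0 := by
  classical
  split_ifs with h
  · subst h
    simp only [map_apply, Prod.mk.injEq, true_and]
    exact tsum_ite_eq' b μ
  · simp [map_apply, h]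

theorem exists_bind_map_prodMk_eq (μ : PMF (α × β)) :
    ∃ κ : α → PMF β, (μ.map Prod.fst).bind (fun a => (κ a).map (Prod.mk a)) = μ := by
  classical
  -- the kernel is arbitrary on fibres of mass zero
  refine ⟨fun a => if h : μ.map Prod.fst a = 0 then μ.map Prod.snd else
    normalize (fun b => μ (a, b)) (by rwa [← map_fst_apply])
      (by rw [← map_fst_apply]; exact apply_ne_top _ _), ?_⟩
  ext ⟨a, b⟩
  simp only [bind_apply, map_prodMk_apply, mul_ite, mul_zero]
  rw [tsum_ite_eq']
  split_ifs with h
  · have hle : μ (a, b) ≤ μ.map Prod.fst a := map_fst_apply μ a ▸ ENNReal.le_tsum b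
    rw [h, zero_mul]
    exact (le_zero_iff.1 (h ▸ hle)).symm
  · rw [normalize_apply, ← map_fst_apply, mul_left_comm,
      ENNReal.mul_inv_cancel h (apply_ne_top _ _), mul_one]

theorem exists_glue {μ₁ : PMF (α × β)} {μ₂ : PMF (β × γ)}
    (h : μ₁.map Prod.snd = μ₂.map Prod.fst) :
    ∃ τ : PMF (α × β × γ), τ.map (fun t => (t.1, t.2.1)) = μ₁ ∧ τ.map Prod.snd = μ₂ := by
  obtain ⟨κ, hκ⟩ := μ₂.exists_bind_map_prodMk_eq
  refine ⟨μ₁.bind fun p => (κ p.2).map (Prod.mk p.1 ∘ Prod.mk p.2), ?_, ?_⟩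
  · have hconst : ∀ p : α × β,
        (κ p.2).map ((fun t : α × β × γ => (t.1, t.2.1)) ∘ Prod.mk p.1 ∘ Prod.mk p.2) = pure p :=
      fun p => map_const (κ p.2) p
    simp only [map_bind, map_comp, hconst, bind_pure]
  · simp only [map_bind, map_comp]
    rw [← hκ, ← h, bind_map]
    rfl

end PMF

section Coupling

open PMF

variable {α β γ : Type*}

theorem isCoupling_map_diag (μ : PMF α) : IsCoupling (μ.map fun a => (a, a)) μ μ :=
  ⟨by rw [map_comp]; exact map_id μ, by rw [map_comp]; exact map_id μ⟩

theorem IsCoupling.exists_tsum_le_add {μa : PMF α} {μb : PMF β} {μc : PMF γ}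
    {μ₁ : PMF (α × β)} {μ₂ : PMF (β × γ)} (h₁ : IsCoupling μ₁ μa μb) (h₂ : IsCoupling μ₂ μb μc)
    {D₁ : α → β → ℝ≥0∞} {D₂ : β → γ → ℝ≥0∞} {D : α → γ → ℝ≥0∞}
    (hD : ∀ a b c, D a c ≤ D₁ a b + D₂ b c) :
    ∃ μ : PMF (α × γ), IsCoupling μ μa μc ∧
      ∑' p, μ p * D p.1 p.2 ≤ ∑' p, μ₁ p * D₁ p.1 p.2 + ∑' p, μ₂ p * D₂ p.1 p.2 := by
  obtain ⟨τ, hτ₁, hτ₂⟩ := exists_glue (h₁.2.trans h₂.1.symm)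
  refine ⟨τ.map fun t => (t.1, t.2.2), ⟨?_, ?_⟩, ?_⟩
  · rw [map_comp, ← h₁.1, ← hτ₁, map_comp]
    rfl
  · rw [map_comp, ← h₂.2, ← hτ₂, map_comp]
    rfl
  · rw [← hτ₁, ← hτ₂]
    simp only [tsum_map_mul, ← ENNReal.tsum_add, ← mul_add]
    exact ENNReal.tsum_le_tsum fun t => mul_le_mul_right (hD _ _ _) _

end Coupling

theorem path_coupling_glue_general {Ω : Type*}
    (d : Ω → Ω → ℕ)
    (hd0 : ∀ s s', d s s' = 0 ↔ s = s')
    (hdtri : ∀ s s' s'', d s s'' ≤ d s s' + d s' s'')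
    (hpath : ∀ s s', 1 < d s s' →
      ∃ s'', s'' ≠ s ∧ s'' ≠ s' ∧ d s s' = d s s'' + d s'' s')
    (f : Ω → PMF Ω) (β : ℝ)
    (hcouple : ∀ s s', d s s' = 1 →
      ∃ μ : PMF (Ω × Ω), IsCoupling μ (f s) (f s') ∧
        ∑' p : Ω × Ω, μ p * (d p.1 p.2 : ℝ≥0∞) ≤ ENNReal.ofReal β) :
    ∀ s s' : Ω,
      ∃ μ : PMF (Ω × Ω), IsCoupling μ (f s) (f s') ∧
        ∑' p : Ω × Ω, μ p * (d p.1 p.2 : ℝ≥0∞) ≤ ENNReal.ofReal (β * d s s') := by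
  suffices H : ∀ n s s', d s s' = n → ∃ μ : PMF (Ω × Ω), IsCoupling μ (f s) (f s') ∧
      ∑' p : Ω × Ω, μ p * (d p.1 p.2 : ℝ≥0∞) ≤ ENNReal.ofReal β * n by
    intro s s'
    rw [ENNReal.ofReal_mul' (Nat.cast_nonneg _), ENNReal.ofReal_natCast]
    exact H _ s s' rfl
  intro n
  induction n using Nat.strong_induction_on with | _ n ih => ?_
  intro s s' hn
  rcases Nat.lt_trichotomy n 1 with hlt | rfl | hgt
  · obtain rfl : s = s' := (hd0 s s').1 (by omega)
    refine ⟨_, isCoupling_map_diag (f s), ?_⟩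
    rw [PMF.tsum_map_mul]
    simp [(hd0 _ _).2]
  · simpa using hcouple s s' hn
  · obtain ⟨t, hts, hts', hsplit⟩ := hpath s s' (hn ▸ hgt)
    have hd₁ : d s t ≠ 0 := fun h => hts ((hd0 s t).1 h).symm
    have hd₂ : d t s' ≠ 0 := fun h => hts' ((hd0 t s').1 h)
    obtain ⟨μ₁, hμ₁, hle₁⟩ := ih _ (by omega) s t rfl
    obtain ⟨μ₂, hμ₂, hle₂⟩ := ih _ (by omega) t s' rfl
    obtain ⟨μ, hμ, hle⟩ := hμ₁.exists_tsum_le_add hμ₂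
      fun a b c => (by exact_mod_cast hdtri a b c : (d a c : ℝ≥0∞) ≤ d a b + d b c)
    refine ⟨μ, hμ, hle.trans ?_⟩
    calc _ ≤ ENNReal.ofReal β * d s t + ENNReal.ofReal β * d t s' := add_le_add hle₁ hle₂
      _ = ENNReal.ofReal β * n := by rw [← mul_add, ← hn, hsplit, Nat.cast_add]

/-- Path gluing step of path coupling: if adjacent states can be coupled with expected distance
at most `β`, then arbitrary states `s, s'` can be coupled with expected distance at most
`β * d s s'`. -/
theorem path_coupling_glue {Ω : Type*} [Fintype Ω] [Nonempty Ω]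
    (d : Ω → Ω → ℕ)
    (hd0 : ∀ s s', d s s' = 0 ↔ s = s')
    (hdsymm : ∀ s s', d s s' = d s' s)
    (hdtri : ∀ s s' s'', d s s'' ≤ d s s' + d s' s'')
    (hpath : ∀ s s', 1 < d s s' →
      ∃ s'', s'' ≠ s ∧ s'' ≠ s' ∧ d s s' = d s s'' + d s'' s')
    (f : Ω → PMF Ω) (β : ℝ) (hβ : 0 ≤ β)
    (hcouple : ∀ s s', d s s' = 1 →
      ∃ μ : PMF (Ω × Ω), IsCoupling μ (f s) (f s') ∧
        ∑' p : Ω × Ω, μ p * (d p.1 p.2 : ℝ≥0∞) ≤ ENNReal.ofReal β) :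
    ∀ s s' : Ω,
      ∃ μ : PMF (Ω × Ω), IsCoupling μ (f s) (f s') ∧
        ∑' p : Ω × Ω, μ p * (d p.1 p.2 : ℝ≥0∞) ≤ ENNReal.ofReal (β * d s s') :=
  path_coupling_glue_general d hd0 hdtri hpath f β hcouple
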